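/- Let z_i, z_j ∈ ℂ² be nonzero spinors and ζ_i, ζ_j ∈ ℂ with z_i⁰ − ζ_i·z_i¹ ≠ 0 and z_j⁰ − ζ_j·z_j¹ ≠ 0, and set μ_k = (ζ_k·conj(z_k⁰) + conj(z_k¹)) / (⟨z_k|z_k⟩·(z_k⁰ − ζ_k·z_k¹)) for k = i, j. Then the unique G_{ij} ∈ SL(2,ℂ) satisfying G_{ij}·z_i = z_j and G_{ij}·(ζ_i, 1) = c·(ζ_j, 1) for some nonzero c ∈ ℂ is given by G_{ij} = Λ_{z_j} · t_{μ_j − μ_i} · Λ_{z_i}⁻¹, where t_μ = [[1, μ],[0, 1]]. -/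

import Mathlib

open Matrix ComplexConjugate

def herm (z w : Fin 2 → ℂ) : ℂ := conj (z 0) * w 0 + conj (z 1) * w 1

def tMu (μ : ℂ) : Matrix (Fin 2) (Fin 2) ℂ := !![1, μ; 0, 1]

noncomputable def Lam (z : Fin 2 → ℂ) : Matrix (Fin 2) (Fin 2) ℂ :=
  !![z 0, -conj (z 1) / herm z z; z 1, conj (z 0) / herm z z]

lemma herm_ne_zero (z : Fin 2 → ℂ) (hz : z ≠ 0) : herm z z ≠ 0 := by
  intro h
  have h' : ((Complex.normSq (z 0) + Complex.normSq (z 1) : ℝ) : ℂ) = 0 := by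
    rw [herm] at h
    push_cast
    rw [Complex.normSq_eq_conj_mul_self, Complex.normSq_eq_conj_mul_self]
    exact h
  have h'' : (Complex.normSq (z 0) + Complex.normSq (z 1) : ℝ) = 0 := by exact_mod_cast h'
  have h0 : Complex.normSq (z 0) = 0 ∧ Complex.normSq (z 1) = 0 := by
    constructor <;> nlinarith [Complex.normSq_nonneg (z 0), Complex.normSq_nonneg (z 1)]
  apply hz
  funext i
  fin_cases i
  · simpa using Complex.normSq_eq_zero.mp h0.1
  · simpa using Complex.normSq_eq_zero.mp h0.2

lemma Lam_inv (z : Fin 2 → ℂ) (hz : herm z z ≠ 0) :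
    (Lam z)⁻¹ = !![conj (z 0) / herm z z, conj (z 1) / herm z z; -(z 1), z 0] := by
  simp only [herm] at hz
  apply Matrix.inv_eq_right_inv
  ext a b
  fin_cases a <;> fin_cases b <;>
    ( simp [Lam, Matrix.mul_apply, Fin.sum_univ_two, herm]
      field_simp
      try ring )
  all_goals rw [← add_mul, mul_inv_cancel₀]; intro h; apply hz; linear_combination h

lemma Lam_det (z : Fin 2 → ℂ) (hz : herm z z ≠ 0) : (Lam z).det = 1 := by
  simp only [herm] at hz
  rw [Lam, Matrix.det_fin_two_of]
  field_simp [herm]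
  simp only [div_eq_mul_inv, ← add_mul, sub_neg_eq_add]
  rw [mul_inv_eq_one₀ (show herm z z ≠ 0 from hz)]; unfold herm; ring

/-- with `μ_k = (ζ_k conj(z_k⁰) + conj(z_k¹)) / (⟨z_k|z_k⟩ (z_k⁰ − ζ_k z_k¹))`,
the unique `G_{ij} ∈ SL(2,ℂ)` satisfying `G_{ij}·z_i = z_j` and
`G_{ij}·(ζ_i,1) ∝ (ζ_j,1)` is `G_{ij} = Λ_{z_j} t_{μ_j − μ_i} Λ_{z_i}⁻¹`. -/
theorem translation_parameter_between_punctures (zi zj : Fin 2 → ℂ) (ζi ζj : ℂ)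
    (hzi : zi ≠ 0) (hzj : zj ≠ 0)
    (hi : zi 0 - ζi * zi 1 ≠ 0) (hj : zj 0 - ζj * zj 1 ≠ 0)
    (μi μj : ℂ)
    (hμi : μi = (ζi * conj (zi 0) + conj (zi 1)) / (herm zi zi * (zi 0 - ζi * zi 1)))
    (hμj : μj = (ζj * conj (zj 0) + conj (zj 1)) / (herm zj zj * (zj 0 - ζj * zj 1)))
    (M : Matrix (Fin 2) (Fin 2) ℂ)
    (hM : M = Lam zj * tMu (μj - μi) * (Lam zi)⁻¹) :
    (M.det = 1 ∧ M.mulVec zi = zj ∧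
      ∃ c : ℂ, c ≠ 0 ∧ M.mulVec ![ζi, 1] = c • ![ζj, 1]) ∧
    ∀ G : Matrix (Fin 2) (Fin 2) ℂ, G.det = 1 → G.mulVec zi = zj →
      (∃ c : ℂ, c ≠ 0 ∧ G.mulVec ![ζi, 1] = c • ![ζj, 1]) → G = M := by
  have hi' := herm_ne_zero zi hzi
  have hj' := herm_ne_zero zj hzj
  set Inv : Matrix (Fin 2) (Fin 2) ℂ :=
    !![conj (zi 0) / herm zi zi, conj (zi 1) / herm zi zi; -(zi 1), zi 0] with hInv
  have hMex : M = Lam zj * tMu (μj - μi) * Inv := by rw [hM, Lam_inv zi hi']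
  -- determinant
  have hdet : M.det = 1 := by
    rw [hMex, Matrix.det_mul, Matrix.det_mul, Lam_det zj hj']
    rw [show (tMu (μj - μi)).det = 1 by simp [tMu]]
    rw [hInv, Matrix.det_fin_two_of]
    simp only [herm] at hi' ⊢
    field_simp
    try ring
  -- M zi = zj
  have step1 : Inv.mulVec zi = ![1, 0] := by
    funext k
    fin_cases k <;>
      ( simp [hInv, Matrix.mulVec, dotProduct, Fin.sum_univ_two]
        try simp only [herm] at hi' ⊢
        try field_simp
        try ring )
  have step2 : (tMu (μj - μi)).mulVec ![1, 0] = ![1, 0] := by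
    funext k
    fin_cases k <;> simp [tMu, Matrix.mulVec, dotProduct, Fin.sum_univ_two]
  have step3 : (Lam zj).mulVec ![1, 0] = zj := by
    funext k
    fin_cases k <;> simp [Lam, Matrix.mulVec, dotProduct, Fin.sum_univ_two]
  have hmv : M.mulVec zi = zj := by
    rw [hMex, ← Matrix.mulVec_mulVec, ← Matrix.mulVec_mulVec, step1, step2, step3]
  -- the constant
  set c : ℂ := (zi 0 - ζi * zi 1) / (zj 0 - ζj * zj 1) with hc
  have hcne : c ≠ 0 := div_ne_zero hi hj
  have s1 : Inv.mulVec ![ζi, 1] =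
      ![(conj (zi 0) * ζi + conj (zi 1)) / herm zi zi, zi 0 - ζi * zi 1] := by
    funext k
    fin_cases k <;>
      ( simp [hInv, Matrix.mulVec, dotProduct, Fin.sum_univ_two]
        try ring_nf
        try field_simp
        try ring )
  have s2 : (tMu (μj - μi)).mulVec
      ![(conj (zi 0) * ζi + conj (zi 1)) / herm zi zi, zi 0 - ζi * zi 1] =
      ![μj * (zi 0 - ζi * zi 1), zi 0 - ζi * zi 1] := by
    funext k
    fin_cases k <;>
      ( simp [tMu, Matrix.mulVec, dotProduct, Fin.sum_univ_two, hμi]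
        try field_simp
        try ring )
  have s3 : (Lam zj).mulVec ![μj * (zi 0 - ζi * zi 1), zi 0 - ζi * zi 1] =
      c • ![ζj, 1] := by
    funext k
    fin_cases k <;>
      ( simp [Lam, Matrix.mulVec, dotProduct, Fin.sum_univ_two, hμj, hc]
        try simp only [herm] at hj' ⊢
        have h1 : zj 0 * conj (zj 0) + conj (zj 1) * zj 1 ≠ 0 := by
          intro h; apply hj'; linear_combination h
        have h2 : zj 1 * conj (zj 1) + conj (zj 0) * zj 0 ≠ 0 := by
          intro h; apply hj'; linear_combination h
        have h3 : -(zj 1 * ζj) + zj 0 ≠ 0 := by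
          intro h; apply hj; linear_combination h
        try field_simp
        try ring )
    all_goals rw [← sub_eq_zero]; field_simp; ring
  have hprop : M.mulVec ![ζi, 1] = c • ![ζj, 1] := by
    rw [hMex, ← Matrix.mulVec_mulVec, ← Matrix.mulVec_mulVec, s1, s2, s3]
  refine ⟨⟨hdet, hmv, c, hcne, hprop⟩, ?_⟩
  -- uniqueness
  have detP : (!![zi 0, ζi; zi 1, 1]).det ≠ 0 := by
    rw [Matrix.det_fin_two_of]; simpa using hi
  have key : ∀ G : Matrix (Fin 2) (Fin 2) ℂ, G.det = 1 → G.mulVec zi = zj →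
      (∃ c' : ℂ, c' ≠ 0 ∧ G.mulVec ![ζi, 1] = c' • ![ζj, 1]) →
      G = !![zj 0, c * ζj; zj 1, c] * (!![zi 0, ζi; zi 1, 1])⁻¹ := by
    rintro G hGdet hG1 ⟨c', hc'ne, hG2⟩
    have e1 := congrFun hG1 0
    have e2 := congrFun hG1 1
    have e3 := congrFun hG2 0
    have e4 := congrFun hG2 1
    simp [Matrix.mulVec, dotProduct, Fin.sum_univ_two] at e1 e2 e3 e4
    have hGP : G * !![zi 0, ζi; zi 1, 1] = !![zj 0, c' * ζj; zj 1, c'] := by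
      ext a b
      fin_cases a <;> fin_cases b <;>
        simp [Matrix.mul_apply, Fin.sum_univ_two] <;>
        [linear_combination e1; linear_combination e3; linear_combination e2;
         linear_combination e4]
    have hdc := congrArg Matrix.det hGP
    rw [Matrix.det_mul, hGdet, one_mul, Matrix.det_fin_two_of, Matrix.det_fin_two_of] at hdc
    have hc'c : c' = c := by
      rw [hc]
      field_simp
      linear_combination -hdc
    rw [← hc'c]
    calc G = G * !![zi 0, ζi; zi 1, 1] * (!![zi 0, ζi; zi 1, 1])⁻¹ := by
            rw [Matrix.mul_assoc, Matrix.mul_nonsing_inv _ (isUnit_iff_ne_zero.mpr detP), Matrix.mul_one]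
      _ = !![zj 0, c' * ζj; zj 1, c'] * (!![zi 0, ζi; zi 1, 1])⁻¹ := by rw [hGP]
  intro G hGdet hG1 hG2
  rw [key G hGdet hG1 hG2, ← key M hdet hmv ⟨c, hcne, hprop⟩]
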